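/- arXiv:2204.12705 — 2 statements merged into one kernel-verified Lean document; each statement's English description precedes it below -/
import Mathlib

section
/- Let (M, M') be a matroid perspective on a finite totally ordered ground set E. Then Σ_{B ind. in M, spanning in M'} x^{|Int_{M'}(B)|} y^{|Ext_M(B)|} z^{r(M)−r(M')−(r_M(B)−r_{M'}(B))} = Σ_{X ∈ D(M,M',<)} x^{r(M'/X)} y^{r*(M|X)} z^{r(M)−r(M')−(r_M(X)−r_{M'}(X))} as polynomials in x, y, z. -/
open Matroid Set
open scoped Classical

variable {α : Type*}

/-- A circuit of a matroid: a minimal dependent set. -/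
def Circ (M : Matroid α) (C : Set α) : Prop := Minimal M.Dep C

/-- Contraction of a set `X` in a matroid `M`, defined via duality and restriction. -/
def mcon (M : Matroid α) (X : Set α) : Matroid α := (M✶ ↾ (M✶.E \ X))✶

/-- The rank of a matroid: the (common) cardinality of its bases. -/
noncomputable def rkN (M : Matroid α) : ℕ := sSup (Set.ncard '' {B | M.IsBase B})

/-- The rank of a set `X` in a matroid `M`. -/
noncomputable def rset (M : Matroid α) (X : Set α) : ℕ := rkN (M ↾ X)

/-- `e` is the minimal element of the set `C`. -/
def IsMinOf [LinearOrder α] (e : α) (C : Set α) : Prop := e ∈ C ∧ ∀ f ∈ C, e ≤ f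

/-- `e` is externally active in `M` with respect to `X`. -/
def ExtAct [LinearOrder α] (M : Matroid α) (X : Set α) (e : α) : Prop :=
  e ∈ M.E \ X ∧ ∃ C, Circ M C ∧ C ⊆ insert e X ∧ IsMinOf e C

/-- `e` is internally active in `M'` with respect to `X`. -/
def IntAct [LinearOrder α] (M' : Matroid α) (X : Set α) (e : α) : Prop :=
  e ∈ X ∧ ∃ C, Circ (M'✶) C ∧ C ⊆ insert e (M'.E \ X) ∧ IsMinOf e C

/-- The set `Ext_M(X)` of externally active elements. -/
def ExtSet [LinearOrder α] (M : Matroid α) (X : Set α) : Set α := {e | ExtAct M X e}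

/-- The set `Int_{M'}(X)` of internally active elements. -/
def IntSet [LinearOrder α] (M' : Matroid α) (X : Set α) : Set α := {e | IntAct M' X e}

/-- `Y` is `(M,<)`-compatible: no `M`-circuit `C` satisfies `Y ∩ C = {min C}`. -/
def Compat [LinearOrder α] (M : Matroid α) (Y : Set α) : Prop :=
  ¬ ∃ C e, Circ M C ∧ IsMinOf e C ∧ Y ∩ C = {e}

/-- `(M, M')` is a matroid perspective: same ground set, and every circuit of `M`
is a union of circuits of `M'` (equivalently, every point of an `M`-circuit `C` lies in
an `M'`-circuit contained in `C`). -/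
def Perspective (M M' : Matroid α) : Prop :=
  M.E = M'.E ∧ ∀ C, Circ M C → ∀ x ∈ C, ∃ C', Circ M' C' ∧ C' ⊆ C ∧ x ∈ C'

/-- `A` is lexicographically smaller than `B` (at the minimal element where they differ). -/
def LexLT [LinearOrder α] (A B : Set α) : Prop :=
  ∃ e, e ∈ A ∧ e ∉ B ∧ ∀ f, f < e → (f ∈ A ↔ f ∈ B)

/-- `B` is the lexicographically minimal basis of `M`. -/
def MinBasis [LinearOrder α] (M : Matroid α) (B : Set α) : Prop :=
  M.IsBase B ∧ ∀ B', M.IsBase B' → ¬ LexLT B' B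

/-- The collection `D(M, M', <)` of compatible sets of a matroid perspective. -/
def DSet [LinearOrder α] (M M' : Matroid α) : Set (Set α) :=
  {X | X ⊆ M.E ∧ Compat (M'✶) X ∧ Compat M (M.E \ X)}


set_option linter.unusedSectionVars false
section Circuits

variable [Fintype α] {M : Matroid α} {C D X Y B I : Set α} {e f : α}

lemma exists_minimal_subset {P : Set α → Prop} {X : Set α} (hX : P X) :
    ∃ C ⊆ X, Minimal P C := by
  by_cases h : Minimal P X
  · exact ⟨X, Subset.rfl, h⟩
  · obtain ⟨Y, hYX, hY⟩ := (not_minimal_iff_exists_lt hX).mp h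
    have : Y.ncard < X.ncard := Set.ncard_lt_ncard hYX (Set.toFinite X)
    obtain ⟨C, hCY, hC⟩ := exists_minimal_subset hY
    exact ⟨C, hCY.trans (le_of_lt hYX), hC⟩
termination_by X.ncard

lemma Circ.dep (hC : Circ M C) : M.Dep C := hC.prop

lemma Circ.subset_ground (hC : Circ M C) : C ⊆ M.E := hC.dep.subset_ground

lemma Circ.nonempty (hC : Circ M C) : C.Nonempty := hC.dep.nonempty

lemma Circ.ssubset_indep (hC : Circ M C) (hXC : X ⊂ C) : M.Indep X := by
  by_contra h
  exact hXC.ne' (hC.eq_of_ge ⟨h, hXC.subset.trans hC.subset_ground⟩ hXC.subset)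

lemma Circ.diff_singleton_indep (hC : Circ M C) (he : e ∈ C) : M.Indep (C \ {e}) :=
  hC.ssubset_indep (sdiff_singleton_ssubset.mpr he)

lemma Circ.mem_closure_diff_singleton (hC : Circ M C) (he : e ∈ C) :
    e ∈ M.closure (C \ {e}) := by
  have h1 := (hC.diff_singleton_indep he).insert_dep_iff (e := e)
  rw [insert_diff_singleton, insert_eq_of_mem he] at h1
  exact ((h1.mp hC.dep).1 : _)

lemma Matroid.Dep.exists_circ_subset (hX : M.Dep X) : ∃ C ⊆ X, Circ M C :=
  exists_minimal_subset hX

lemma indep_iff_no_circ (hX : X ⊆ M.E) : M.Indep X ↔ ¬ ∃ C ⊆ X, Circ M C := by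
  constructor
  · rintro h ⟨C, hCX, hC⟩
    exact hC.dep.not_indep (h.subset hCX)
  · intro h
    by_contra hi
    exact h (Matroid.Dep.exists_circ_subset ⟨hi, hX⟩)

lemma exists_circ_of_mem_closure (hI : M.Indep I) (he : e ∈ M.closure I) (heI : e ∉ I) :
    ∃ C, Circ M C ∧ C ⊆ insert e I ∧ e ∈ C := by
  have hd : M.Dep (insert e I) := hI.insert_dep_iff.mpr ⟨he, heI⟩
  obtain ⟨C, hCX, hC⟩ := hd.exists_circ_subset
  refine ⟨C, hC, hCX, ?_⟩
  by_contra heC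
  exact hC.dep.not_indep (hI.subset (by rwa [subset_insert_iff_of_notMem heC] at hCX))

/-- Any circuit inside `insert e I` for `I` independent contains `e`. -/
lemma Circ.mem_of_subset_insert (hC : Circ M C) (hI : M.Indep I) (hCs : C ⊆ insert e I) :
    e ∈ C := by
  by_contra h
  exact hC.dep.not_indep (hI.subset (by rwa [subset_insert_iff_of_notMem h] at hCs))

/-- Uniqueness of the fundamental circuit. -/
lemma circ_subset_insert_unique (hI : M.Indep I) (hC : Circ M C) (hD : Circ M D)
    (hCs : C ⊆ insert e I) (hDs : D ⊆ insert e I) : C = D := by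
  by_contra hne
  have h1 : ∀ C D : Set α, Circ M C → Circ M D → C ⊆ insert e I → D ⊆ insert e I →
      ∀ f, f ∈ C → f ∉ D → False := by
    intro C D hC hD hCs hDs f hfC hfD
    have heC : e ∈ C := hC.mem_of_subset_insert hI hCs
    have heD : e ∈ D := hD.mem_of_subset_insert hI hDs
    have hfe : f ≠ e := fun h => hfD (h ▸ heD)
    have hfI : f ∈ I := by
      rcases hCs hfC with h | h
      · exact absurd h hfe
      · exact h
    have he1 : e ∈ M.closure (((C ∪ D) \ {e}) \ {f}) := by
      refine mem_of_mem_of_subset (hD.mem_closure_diff_singleton heD) (M.closure_subset_closure ?_)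
      intro x hx
      exact ⟨⟨Or.inr hx.1, hx.2⟩, fun h => hfD ((h : x = f) ▸ hx).1⟩
    have hf1 : f ∈ M.closure (insert e (((C ∪ D) \ {e}) \ {f})) := by
      refine mem_of_mem_of_subset (hC.mem_closure_diff_singleton hfC) (M.closure_subset_closure ?_)
      intro x hx
      by_cases hxe : x = e
      · exact Or.inl hxe
      · exact Or.inr ⟨⟨Or.inl hx.1, hxe⟩, hx.2⟩
    rw [closure_insert_eq_of_mem_closure he1] at hf1
    have hsub : ((C ∪ D) \ {e}) \ {f} ⊆ I \ {f} := by
      intro x hx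
      refine ⟨?_, hx.2⟩
      rcases hx.1.1 with h | h
      · rcases hCs h with h' | h'
        · exact absurd h' hx.1.2
        · exact h'
      · rcases hDs h with h' | h'
        · exact absurd h' hx.1.2
        · exact h'
    have hf2 : f ∈ M.closure (I \ {f}) := mem_of_mem_of_subset hf1 (M.closure_subset_closure hsub)
    have hI' : M.Indep (I \ {f}) := hI.subset diff_subset
    have hf3 : f ∉ M.closure (I \ {f}) := by
      rw [hI'.notMem_closure_iff_of_notMem (fun h => h.2 rfl) (hI.subset_ground hfI),
        insert_diff_singleton, insert_eq_of_mem hfI]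
      exact hI
    exact hf3 hf2
  by_cases hCD : C ⊆ D
  · exact hne (hD.eq_of_ge hC.dep hCD).symm
  · obtain ⟨f, hfC, hfD⟩ := not_subset.mp hCD
    exact h1 C D hC hD hCs hDs f hfC hfD

end Circuits


section Cocirc

variable [Fintype α] {M M' : Matroid α} {C D S T X Y B I : Set α} {e f x y : α}

/-- A cocircuit is disjoint from the closure of its complement. -/
lemma Circ.not_mem_closure_compl (hD : Circ (M✶) D) (hf : f ∈ D) :
    f ∉ M.closure (M.E \ D) := by
  intro hcl
  have hDE : D ⊆ M.E := by simpa using hD.subset_ground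
  have hns : ¬ M.Spanning (M.E \ D) := by
    rw [← coindep_iff_compl_spanning]
    exact hD.dep.not_indep
  have hsp : M.Spanning (M.E \ (D \ {f})) := by
    rw [← coindep_iff_compl_spanning (diff_subset.trans hDE)]
    exact hD.diff_singleton_indep hf
  have hset : M.E \ (D \ {f}) = insert f (M.E \ D) := by
    ext z
    simp only [mem_diff, mem_singleton_iff, mem_insert_iff, not_and, not_not]
    constructor
    · rintro ⟨hz, h2⟩
      by_cases hzD : z ∈ D
      · exact Or.inl (h2 hzD)
      · exact Or.inr ⟨hz, hzD⟩
    · rintro (rfl | ⟨hz, h2⟩)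
      · exact ⟨hDE hf, fun _ => rfl⟩
      · exact ⟨hz, fun h => absurd h h2⟩
  rw [hset, spanning_iff_closure_eq, closure_insert_eq_of_mem_closure hcl,
    ← spanning_iff_closure_eq] at hsp
  exact hns hsp

/-- Orthogonality: a circuit and a cocircuit never meet in exactly one element. -/
lemma Circ.exists_ne_of_mem_inter (hC : Circ M C) (hD : Circ (M✶) D) (hf : f ∈ C ∩ D) :
    ∃ g ∈ C ∩ D, g ≠ f := by
  by_contra h
  push_neg at h
  have hsub : C \ {f} ⊆ M.E \ D := by
    intro x hx
    refine ⟨hC.subset_ground hx.1, fun hxD => hx.2 (h x ⟨hx.1, hxD⟩)⟩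
  exact hD.not_mem_closure_compl hf.2
    (mem_of_mem_of_subset (hC.mem_closure_diff_singleton hf.1) (M.closure_subset_closure hsub))

lemma Perspective.ground_eq (hP : Perspective M M') : M.E = M'.E := hP.1

lemma Perspective.dep_of_dep (hP : Perspective M M') (hX : M.Dep X) : M'.Dep X := by
  obtain ⟨C, hCX, hC⟩ := hX.exists_circ_subset
  obtain ⟨x, hx⟩ := hC.nonempty
  obtain ⟨C', hC', hC'C, -⟩ := hP.2 C hC x hx
  have : ¬ M'.Indep X := fun h => hC'.dep.not_indep (h.subset (hC'C.trans hCX))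
  exact ⟨this, hP.ground_eq ▸ hX.subset_ground⟩

lemma Perspective.indep_of_indep (hP : Perspective M M') (hI : M'.Indep I) : M.Indep I := by
  by_contra h
  exact (hP.dep_of_dep ⟨h, hP.ground_eq.symm ▸ hI.subset_ground⟩).not_indep hI

lemma Perspective.closure_subset_closure (hP : Perspective M M') (hX : X ⊆ M.E) :
    M.closure X ⊆ M'.closure X := by
  obtain ⟨I, hI⟩ := M.exists_isBasis X
  intro x hx
  have hXE' : X ⊆ M'.E := hP.ground_eq ▸ hX
  by_cases hxX : x ∈ X
  · exact M'.subset_closure X hXE' hxX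
  · have hxI : x ∉ I := fun h => hxX (hI.subset h)
    rw [← hI.closure_eq_closure] at hx
    obtain ⟨C, hC, hCs, hxC⟩ := exists_circ_of_mem_closure hI.indep hx hxI
    obtain ⟨C', hC', hC'C, hxC'⟩ := hP.2 C hC x hxC
    have h1 : x ∈ M'.closure (C' \ {x}) := hC'.mem_closure_diff_singleton hxC'
    refine mem_of_mem_of_subset h1 (M'.closure_subset_closure ?_)
    intro z hz
    rcases hCs (hC'C hz.1) with h | h
    · exact absurd h hz.2
    · exact hI.subset h

/-- Orthogonality for a perspective: an `M`-circuit and an `M'`-cocircuit never meet in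
exactly one element. -/
lemma Perspective.exists_ne_of_mem_inter (hP : Perspective M M') (hC : Circ M C)
    (hD : Circ (M'✶) D) (hf : f ∈ C ∩ D) : ∃ g ∈ C ∩ D, g ≠ f := by
  obtain ⟨C', hC', hC'C, hfC'⟩ := hP.2 C hC f hf.1
  obtain ⟨g, hg, hgf⟩ := hC'.exists_ne_of_mem_inter hD ⟨hfC', hf.2⟩
  exact ⟨g, ⟨hC'C hg.1, hg.2⟩, hgf⟩

end Cocirc


section Rank

variable [Fintype α] {M M' : Matroid α} {C D S T X Y B I J : Set α} {e f x y : α}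

lemma Matroid.Indep.not_mem_closure_diff (hB : M.Indep B) (hx : x ∈ B) :
    x ∉ M.closure (B \ {x}) := by
  intro hmem
  have h1 : M.Indep (B \ {x}) := hB.subset diff_subset
  have h2 : x ∉ B \ {x} := fun h => h.2 rfl
  have h3 : M.Indep (insert x (B \ {x})) := by
    rw [insert_diff_singleton, insert_eq_of_mem hx]; exact hB
  exact (h1.notMem_closure_iff_of_notMem h2 (hB.subset_ground hx)).mpr h3 hmem

lemma rkN_eq_ncard_of_base (hB : M.IsBase B) : rkN M = B.ncard := by
  have h : Set.ncard '' {B' | M.IsBase B'} = {B.ncard} := by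
    ext n
    simp only [mem_image, mem_setOf_eq, mem_singleton_iff]
    exact ⟨fun ⟨B', hB', h⟩ => h ▸ hB'.ncard_eq_ncard_of_isBase hB, fun h => ⟨B, hB, h.symm⟩⟩
  rw [rkN, h, csSup_singleton]

lemma rset_eq_ncard_of_basis' (hI : M.IsBasis' I X) : rset M X = I.ncard :=
  rkN_eq_ncard_of_base (isBase_restrict_iff'.mpr hI)

lemma rset_eq_ncard_of_basis (hI : M.IsBasis I X) : rset M X = I.ncard :=
  rset_eq_ncard_of_basis' hI.isBasis'

lemma rset_ground_eq (M : Matroid α) : rset M M.E = rkN M := by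
  rw [rset, restrict_ground_eq_self]

lemma rset_indep (hI : M.Indep I) : rset M I = I.ncard :=
  rset_eq_ncard_of_basis hI.isBasis_self

lemma rset_spanning (hS : M.Spanning S) : rset M S = rkN M := by
  obtain ⟨I, hI⟩ := M.exists_isBasis S hS.subset_ground
  have hIsp : M.Spanning I := by
    rw [spanning_iff_closure_eq, hI.closure_eq_closure, ← spanning_iff_closure_eq]
    exact hS
  rw [rset_eq_ncard_of_basis hI, rkN_eq_ncard_of_base (hI.indep.isBase_of_spanning hIsp)]

lemma rkN_dual_add (M : Matroid α) : rkN M✶ + rkN M = M.E.ncard := by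
  obtain ⟨B, hB⟩ := M.exists_isBase
  rw [rkN_eq_ncard_of_base hB, rkN_eq_ncard_of_base hB.compl_isBase_dual]
  exact ncard_diff_add_ncard_of_subset hB.subset_ground

/-- The dual rank formula. -/
lemma rformula (M : Matroid α) (hT : T ⊆ M.E) :
    rset M✶ T + rkN M = T.ncard + rset M (M.E \ T) := by
  set S := M.E \ T with hSdef
  have hSE : S ⊆ M.E := diff_subset
  obtain ⟨I, hI⟩ := M.exists_isBasis S
  obtain ⟨B, hB, hIB⟩ := hI.exists_isBase
  set J := M.E \ (B ∪ S) with hJdef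
  have hJE : J ⊆ M.E := diff_subset
  have hJiB : J ⊆ M.E \ B := diff_subset_diff_right subset_union_left
  have hJi : M✶.Indep J := hB.compl_isBase_dual.indep.subset hJiB
  have hTS : M.E \ S = T := diff_diff_cancel_left hT
  have hJT : J ⊆ T := hTS ▸ diff_subset_diff_right subset_union_right
  have hmem : ∀ x ∈ T, x ∉ J → x ∈ M✶.closure J := by
    intro x hxT hxJ
    have hxE : x ∈ M.E := hT hxT
    have hxS : x ∉ S := fun h => h.2 hxT
    have hxBS : x ∈ B ∪ S := by
      by_contra h
      exact hxJ ⟨hxE, h⟩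
    have hxB : x ∈ B := hxBS.elim id (fun h => absurd h hxS)
    have hxI : x ∉ I := fun h => hxS (hI.subset h)
    rw [hJi.mem_closure_iff]
    left
    constructor
    · -- insert x J is dependent in M✶
      intro hind
      have hsp : M.Spanning (M.E \ insert x J) := (coindep_iff_compl_spanning
        ((insert_subset hxE hJE))).mp hind
      have hset : M.E \ insert x J = (B \ {x}) ∪ S := by
        ext z
        constructor
        · rintro ⟨hz, hzn⟩
          have hz1 : z ≠ x := fun h => hzn (h ▸ mem_insert x J)
          have hz2 : z ∉ J := fun h => hzn (mem_insert_of_mem x h)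
          have hz3 : z ∈ B ∪ S := by
            by_contra h
            exact hz2 ⟨hz, h⟩
          rcases hz3 with h | h
          · exact Or.inl ⟨h, fun hh => hz1 hh⟩
          · exact Or.inr h
        · rintro (⟨hzB, hzx⟩ | hzS)
          · refine ⟨hB.subset_ground hzB, fun hmem => ?_⟩
            rcases mem_insert_iff.mp hmem with rfl | hzJ
            · exact hzx rfl
            · exact hzJ.2 (Or.inl hzB)
          · refine ⟨hSE hzS, fun hmem => ?_⟩
            rcases mem_insert_iff.mp hmem with rfl | hzJ
            · exact hxS hzS
            · exact hzJ.2 (Or.inr hzS)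
      have hcl : M.closure ((B \ {x}) ∪ S) = M.closure (B \ {x}) := by
        rw [← closure_union_closure_right_eq, ← hI.closure_eq_closure,
          closure_union_closure_right_eq, union_eq_self_of_subset_right]
        rw [hIB]
        exact fun z hz => ⟨hz.1, fun h => hxS ((h : z = x) ▸ hz.2)⟩
      have hx1 : x ∈ M.closure (B \ {x}) := by
        rw [← hcl, ← hset]
        have hcleq := (spanning_iff_closure_eq (S := M.E \ insert x J) diff_subset).mp hsp
        rw [hcleq]
        exact hxE
      exact hB.indep.not_mem_closure_diff hxB hx1
    · rw [dual_ground]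
      exact insert_subset hxE hJE
  have hJbasis : M✶.IsBasis J T := by
    refine hJi.isBasis_of_subset_of_subset_closure hJT ?_
    intro x hxT
    by_cases hxJ : x ∈ J
    · exact M✶.subset_closure J (by rwa [dual_ground]) hxJ
    · exact hmem x hxT hxJ
  have e1 : J.ncard + (B ∪ S).ncard = M.E.ncard := by
    rw [hJdef]
    exact ncard_diff_add_ncard_of_subset (union_subset hB.subset_ground hSE)
  have e2 : (B ∪ S).ncard + (B ∩ S).ncard = B.ncard + S.ncard :=
    ncard_union_add_ncard_inter B S
  have e3 : S.ncard + T.ncard = M.E.ncard := by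
    rw [hSdef, add_comm]
    rw [← ncard_diff_add_ncard_of_subset hT, add_comm]
  have e4 : rset M (M.E \ T) = (B ∩ S).ncard := by
    rw [← hSdef, rset_eq_ncard_of_basis hI, hIB]
  rw [rset_eq_ncard_of_basis hJbasis, rkN_eq_ncard_of_base hB, e4]
  omega

lemma rset_insert_eq_of_mem_closure (hS : S ⊆ M.E) (hx : x ∈ M.closure S) :
    rset M (insert x S) = rset M S := by
  obtain ⟨I, hI⟩ := M.exists_isBasis S
  have hxE : x ∈ M.E := M.closure_subset_ground S hx
  have hI2 : M.IsBasis I (insert x S) := by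
    refine hI.indep.isBasis_of_subset_of_subset_closure (hI.subset.trans (subset_insert x S)) ?_
    rw [hI.closure_eq_closure]
    exact insert_subset hx (M.subset_closure S)
  rw [rset_eq_ncard_of_basis hI, rset_eq_ncard_of_basis hI2]

lemma rset_insert_eq_add_one (hS : S ⊆ M.E) (hxE : x ∈ M.E) (hx : x ∉ M.closure S) :
    rset M (insert x S) = rset M S + 1 := by
  obtain ⟨I, hI⟩ := M.exists_isBasis S
  have hxS : x ∉ S := fun h => hx (M.subset_closure S hS h)
  have hxI : x ∉ I := fun h => hxS (hI.subset h)
  have hxcl : x ∉ M.closure I := by rwa [hI.closure_eq_closure]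
  have hind : M.Indep (insert x I) := by
    rw [hI.indep.insert_indep_iff_of_notMem hxI]
    exact ⟨hxE, hxcl⟩
  have hI2 : M.IsBasis (insert x I) (insert x S) := by
    refine hind.isBasis_of_subset_of_subset_closure (insert_subset_insert hI.subset) ?_
    refine insert_subset (M.subset_closure _ hind.subset_ground (mem_insert x I)) ?_
    refine hI.subset_closure.trans (M.closure_subset_closure (subset_insert x I))
  rw [rset_eq_ncard_of_basis hI, rset_eq_ncard_of_basis hI2, ncard_insert_of_notMem hxI]

lemma rset_insert_cases (hS : S ⊆ M.E) (hxE : x ∈ M.E) :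
    rset M (insert x S) = rset M S ∨ rset M (insert x S) = rset M S + 1 := by
  by_cases hx : x ∈ M.closure S
  · exact Or.inl (rset_insert_eq_of_mem_closure hS hx)
  · exact Or.inr (rset_insert_eq_add_one hS hxE hx)

lemma mem_closure_iff_rset (hS : S ⊆ M.E) (hxE : x ∈ M.E) :
    x ∈ M.closure S ↔ rset M (insert x S) = rset M S := by
  refine ⟨rset_insert_eq_of_mem_closure hS, fun h => ?_⟩
  by_contra hx
  rw [rset_insert_eq_add_one hS hxE hx] at h
  omega

/-- Membership in the closure in the dual matroid. -/
lemma mem_dual_closure_iff (hS : S ⊆ M.E) (hxE : x ∈ M.E) (hxS : x ∉ S) :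
    x ∈ M✶.closure S ↔ x ∉ M.closure (M.E \ insert x S) := by
  set W := M.E \ insert x S with hW
  have hWE : W ⊆ M.E := diff_subset
  have hWx : insert x W = M.E \ S := by
    rw [hW]
    ext z
    simp only [mem_insert_iff, mem_diff, not_or]
    constructor
    · rintro (rfl | ⟨h1, h2, h3⟩)
      · exact ⟨hxE, hxS⟩
      · exact ⟨h1, h3⟩
    · rintro ⟨h1, h2⟩
      by_cases hzx : z = x
      · exact Or.inl hzx
      · exact Or.inr ⟨h1, hzx, h2⟩
  have f1 := rformula M hS
  have f2 := rformula M (insert_subset hxE hS)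
  rw [← hW] at f2
  have hc1 : (insert x S).ncard = S.ncard + 1 := ncard_insert_of_notMem hxS
  have m1 := mem_closure_iff_rset (M := M) hWE hxE
  rw [hWx] at m1
  have m2 := mem_closure_iff_rset (M := M✶) (show S ⊆ M✶.E by rwa [dual_ground])
    (show x ∈ M✶.E by rwa [dual_ground])
  have c1 := rset_insert_cases (M := M) hWE hxE
  rw [hWx] at c1
  rw [m2, m1]
  constructor
  · intro h h2
    omega
  · intro h
    rcases c1 with c | c <;> omega

end Rank


section Dual
variable [Fintype α] {M M' : Matroid α} {C D S T X Y B I : Set α} {e f x y : α}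

lemma Perspective.dual (hP : Perspective M M') : Perspective (M'✶) (M✶) := by
  constructor
  · simp [hP.ground_eq]
  · intro D hD f hf
    have hDs : D ⊆ M'.E := by simpa using hD.subset_ground
    have hfE : f ∈ M.E := hP.ground_eq ▸ hDs hf
    have h1 : f ∉ M'.closure (M'.E \ D) := hD.not_mem_closure_compl hf
    have h2 : f ∉ M.closure (M.E \ D) := by
      intro h
      have h' : f ∈ M'.closure (M.E \ D) :=
        hP.closure_subset_closure (X := M.E \ D) diff_subset h
      rw [hP.ground_eq] at h'
      exact h1 h'
    have h3 : f ∈ M✶.closure (D \ {f}) := by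
      rw [mem_dual_closure_iff (diff_subset.trans (hP.ground_eq ▸ hDs)) hfE (show f ∉ D \ {f} from fun h => h.2 rfl)]
      rwa [insert_diff_singleton, insert_eq_of_mem hf]
    obtain ⟨I, hI⟩ := M✶.exists_isBasis (D \ {f})
      (by rw [dual_ground]; exact diff_subset.trans (hP.ground_eq ▸ hDs))
    have h4 : f ∈ M✶.closure I := by rwa [hI.closure_eq_closure]
    have h5 : f ∉ I := fun h => (hI.subset h).2 rfl
    obtain ⟨C, hC, hCs, hfC⟩ := exists_circ_of_mem_closure hI.indep h4 h5
    exact ⟨C, hC, hCs.trans (insert_subset hf (hI.subset.trans diff_subset)), hfC⟩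

section LO
variable [LinearOrder α]

lemma intSet_eq_extSet_dual (hB : B ⊆ M'.E) :
    IntSet M' B = ExtSet (M'✶) (M'.E \ B) := by
  ext e
  simp only [IntSet, ExtSet, IntAct, ExtAct, mem_setOf_eq, dual_ground]
  constructor
  · rintro ⟨heB, hrest⟩
    exact ⟨⟨hB heB, fun h => h.2 heB⟩, hrest⟩
  · rintro ⟨⟨heE, heB⟩, hrest⟩
    refine ⟨?_, hrest⟩
    by_contra h
    exact heB ⟨heE, h⟩

lemma extSet_eq_intSet_dual (hB : B ⊆ M.E) :
    ExtSet M B = IntSet (M✶) (M.E \ B) := by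
  have hq : M✶.E \ (M.E \ B) = B := by
    rw [dual_ground]
    exact diff_diff_cancel_left hB
  ext e
  simp only [IntSet, ExtSet, IntAct, ExtAct, mem_setOf_eq, dual_dual, hq]

lemma IntSet_subset (M' : Matroid α) (B : Set α) : IntSet M' B ⊆ B := fun _ h => h.1

lemma ExtSet_subset (M : Matroid α) (B : Set α) : ExtSet M B ⊆ M.E \ B := fun _ h => h.1

end LO
end Dual


section Act
variable [Fintype α] [LinearOrder α] {M M' : Matroid α} {B C D S T X Y I : Set α}
  {a e f g x y : α}

/-- The fundamental circuit of an externally active element avoids the internally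
active set. -/
lemma circ_inter_intSet_empty (hP : Perspective M M') (hC : Circ M C) (hCs : C ⊆ insert e B)
    (hmin : IsMinOf e C) (heB : e ∉ B) : C ∩ IntSet M' B = ∅ := by
  by_contra h
  obtain ⟨f, hfC, hfI⟩ := nonempty_iff_ne_empty.mpr h
  obtain ⟨hfB, D, hD, hDs, hminD⟩ := hfI
  obtain ⟨g, hg, hgf⟩ := hP.exists_ne_of_mem_inter hC hD ⟨hfC, hminD.1⟩
  have hgB : g ∉ B := by
    rcases hDs hg.2 with h1 | h1
    · exact absurd h1 hgf
    · exact h1.2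
  have hge : g = e := by
    rcases hCs hg.1 with h1 | h1
    · exact h1
    · exact absurd h1 hgB
  have h1 : f ≤ e := hminD.2 e (hge ▸ hg.2)
  have h2 : e ≤ f := hmin.2 f hfC
  exact heB ((le_antisymm h2 h1) ▸ hfB)

lemma phi_subset_ground (hBi : M.Indep B) (hP : Perspective M M') :
    (B \ IntSet M' B) ∪ ExtSet M B ⊆ M.E :=
  union_subset (diff_subset.trans hBi.subset_ground) (fun _ h => h.1.1)

lemma circ_diff_subset_phi (hP : Perspective M M') (hC : Circ M C) (hCs : C ⊆ insert e B)
    (hmin : IsMinOf e C) (heB : e ∉ B) : C \ {e} ⊆ B \ IntSet M' B := by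
  have hInt := circ_inter_intSet_empty hP hC hCs hmin heB
  intro z hz
  have hzB : z ∈ B := by
    rcases hCs hz.1 with h1 | h1
    · exact absurd h1 hz.2
    · exact h1
  refine ⟨hzB, fun hzI => ?_⟩
  rw [eq_empty_iff_forall_notMem] at hInt
  exact hInt z ⟨hz.1, hzI⟩

lemma phi_gt_subset_closure (hP : Perspective M M') (hBi : M.Indep B) (a : α) :
    {f | f ∈ (B \ IntSet M' B) ∪ ExtSet M B ∧ a < f} ⊆
      M.closure {f | f ∈ B \ IntSet M' B ∧ a < f} := by
  have hsub : {f | f ∈ B \ IntSet M' B ∧ a < f} ⊆ M.E :=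
    fun z hz => hBi.subset_ground hz.1.1
  rintro x ⟨hx | hx, hax⟩
  · exact M.subset_closure _ hsub ⟨hx, hax⟩
  · obtain ⟨⟨hxE, hxB⟩, C, hC, hCs, hmin⟩ := hx
    have hd := circ_diff_subset_phi hP hC hCs hmin hxB
    have hss : C \ {x} ⊆ {f | f ∈ B \ IntSet M' B ∧ a < f} := by
      intro z hz
      refine ⟨hd hz, lt_of_lt_of_le hax ?_⟩
      exact hmin.2 z hz.1
    exact mem_of_mem_of_subset (hC.mem_closure_diff_singleton hmin.1)
      (M.closure_subset_closure hss)

lemma phi_subset_closure (hP : Perspective M M') (hBi : M.Indep B) :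
    (B \ IntSet M' B) ∪ ExtSet M B ⊆ M.closure (B \ IntSet M' B) := by
  rintro x (hx | hx)
  · exact M.subset_closure _ (diff_subset.trans hBi.subset_ground) hx
  · obtain ⟨⟨hxE, hxB⟩, C, hC, hCs, hmin⟩ := hx
    have hd := circ_diff_subset_phi hP hC hCs hmin hxB
    exact mem_of_mem_of_subset (hC.mem_closure_diff_singleton hmin.1)
      (M.closure_subset_closure hd)

lemma basis_phi (hP : Perspective M M') (hBi : M.Indep B) :
    M.IsBasis (B \ IntSet M' B) ((B \ IntSet M' B) ∪ ExtSet M B) :=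
  (hBi.subset diff_subset).isBasis_of_subset_of_subset_closure subset_union_left
    (phi_subset_closure hP hBi)

/-- Characterization of the externally active set from the image set alone. -/
lemma extSet_eq_phi_char (hP : Perspective M M') (hBi : M.Indep B) :
    ExtSet M B = {e | e ∈ (B \ IntSet M' B) ∪ ExtSet M B ∧
      e ∈ M.closure {f | f ∈ (B \ IntSet M' B) ∪ ExtSet M B ∧ e < f}} := by
  ext e
  simp only [mem_setOf_eq]
  constructor
  · intro he
    obtain ⟨⟨heE, heB⟩, C, hC, hCs, hmin⟩ := he
    refine ⟨Or.inr ⟨⟨heE, heB⟩, C, hC, hCs, hmin⟩, ?_⟩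
    have hd := circ_diff_subset_phi hP hC hCs hmin heB
    refine mem_of_mem_of_subset (hC.mem_closure_diff_singleton hmin.1)
      (M.closure_subset_closure ?_)
    intro z hz
    exact ⟨Or.inl (hd hz), lt_of_le_of_ne (hmin.2 z hz.1) (fun h => hz.2 h.symm)⟩
  · rintro ⟨hin, hcl⟩
    have hcl2 : e ∈ M.closure {f | f ∈ B \ IntSet M' B ∧ e < f} := by
      exact mem_of_mem_of_subset hcl
        (closure_subset_closure_of_subset_closure (phi_gt_subset_closure hP hBi e))
    rcases hin with hin | hin
    · exfalso
      have hsub : {f | f ∈ B \ IntSet M' B ∧ e < f} ⊆ B \ {e} := by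
        intro z hz
        exact ⟨hz.1.1, fun h => absurd ((h : z = e) ▸ hz.2) (lt_irrefl e)⟩
      exact hBi.not_mem_closure_diff hin.1
        (mem_of_mem_of_subset hcl2 (M.closure_subset_closure hsub))
    · exact hin

/-- The complement of the image set is `(M,<)`-compatible. -/
lemma compat_compl_phi (hP : Perspective M M') (hBi : M.Indep B) (hBs : M'.Spanning B) :
    Compat M (M.E \ ((B \ IntSet M' B) ∪ ExtSet M B)) := by
  set X := (B \ IntSet M' B) ∪ ExtSet M B with hX
  rintro ⟨C, e, hC, hmin, hinter⟩
  have heC : e ∈ C := hmin.1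
  have he : e ∈ M.E \ X := by
    have : e ∈ (M.E \ X) ∩ C := hinter ▸ rfl
    exact this.1
  have hCd : C \ {e} ⊆ X := by
    intro z hz
    by_contra hzX
    have hzE : z ∈ M.E := hC.subset_ground hz.1
    have : z ∈ (M.E \ X) ∩ C := ⟨⟨hzE, hzX⟩, hz.1⟩
    rw [hinter] at this
    exact hz.2 this
  by_cases heB : e ∈ B
  · -- e is internally active; use orthogonality twice
    have heI : e ∈ IntSet M' B := by
      by_contra h
      exact he.2 (Or.inl ⟨heB, h⟩)
    obtain ⟨-, D, hD, hDs, hminD⟩ := heI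
    obtain ⟨g, hg, hge⟩ := hP.exists_ne_of_mem_inter hC hD ⟨heC, hminD.1⟩
    have hgB : g ∉ B := by
      rcases hDs hg.2 with h1 | h1
      · exact absurd h1 hge
      · exact h1.2
    have hgX : g ∈ X := hCd ⟨hg.1, hge⟩
    have hgE : g ∈ ExtSet M B := by
      rcases hgX with h | h
      · exact absurd h.1 hgB
      · exact h
    obtain ⟨-, Cg, hCg, hCgs, hminCg⟩ := hgE
    obtain ⟨h', hh, hhg⟩ := hP.exists_ne_of_mem_inter hCg hD ⟨hminCg.1, hg.2⟩
    have hhe : h' = e := by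
      rcases hCgs hh.1 with h1 | h1
      · exact absurd h1 hhg
      · rcases hDs hh.2 with h2 | h2
        · exact h2
        · exact absurd h1 h2.2
    have h1 : g ≤ e := hminCg.2 e (hhe ▸ hh.1)
    have h2 : e ≤ g := hmin.2 g hg.1
    exact he.2 ((le_antisymm h2 h1) ▸ hgX)
  · -- e would be externally active, contradiction with e ∉ X
    have hcl : e ∈ M.closure {f | f ∈ B \ IntSet M' B ∧ e < f} := by
      have h1 : C \ {e} ⊆ {f | f ∈ X ∧ e < f} := by
        intro z hz
        exact ⟨hCd hz, lt_of_le_of_ne (hmin.2 z hz.1) (fun h => hz.2 h.symm)⟩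
      refine mem_of_mem_of_subset (hC.mem_closure_diff_singleton heC) ?_
      exact (M.closure_subset_closure h1).trans
        (closure_subset_closure_of_subset_closure (phi_gt_subset_closure hP hBi e))
    have hsub : {f | f ∈ B \ IntSet M' B ∧ e < f} ⊆ M.E :=
      fun z hz => hBi.subset_ground hz.1.1
    have hind : M.Indep {f | f ∈ B \ IntSet M' B ∧ e < f} :=
      hBi.subset (fun z hz => hz.1.1)
    have heS : e ∉ {f | f ∈ B \ IntSet M' B ∧ e < f} := fun h => lt_irrefl e h.2
    obtain ⟨C', hC', hC's, heC'⟩ := exists_circ_of_mem_closure hind hcl heS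
    have hmin' : IsMinOf e C' := by
      refine ⟨heC', fun z hz => ?_⟩
      rcases hC's hz with h1 | h1
      · exact le_of_eq h1.symm
      · exact le_of_lt h1.2
    have : e ∈ ExtSet M B := by
      refine ⟨⟨he.1, heB⟩, C', hC', ?_, hmin'⟩
      exact hC's.trans (insert_subset_insert (fun z hz => hz.1.1))
    exact he.2 (Or.inr this)

end Act


section Moves
variable [Fintype α] [LinearOrder α] {M M' : Matroid α} {B C D S T X Y I : Set α}
  {a e f g x y : α}

lemma move_remove (hP : Perspective M M') (hBi : M.Indep B) (hBs : M'.Spanning B)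
    (hx : x ∈ B) (hxInt : x ∉ IntSet M' B) :
    ∃ B', M.Indep B' ∧ M'.Spanning B' ∧ x ∉ B' ∧
      (B' = B \ {x} ∨ ∃ y, y < x ∧ y ∉ B ∧ B' = insert y (B \ {x})) := by
  have hBE' : B ⊆ M'.E := hP.ground_eq ▸ hBi.subset_ground
  have hxE' : x ∈ M'.E := hBE' hx
  by_cases hsp : M'.Spanning (B \ {x})
  · exact ⟨B \ {x}, hBi.subset diff_subset, hsp, fun h => h.2 rfl, Or.inl rfl⟩
  · have hco : M'✶.Indep (M'.E \ B) := (spanning_iff_compl_coindep hBE').mp hBs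
    have hins : insert x (M'.E \ B) ⊆ M'.E := insert_subset hxE' diff_subset
    have hcompl : M'.E \ insert x (M'.E \ B) = B \ {x} := by
      ext z
      constructor
      · rintro ⟨hz, hzn⟩
        have h1 : z ≠ x := fun h => hzn (by rw [h]; exact mem_insert x _)
        have h2 : z ∈ B := by
          by_contra hc
          exact hzn (mem_insert_of_mem x ⟨hz, hc⟩)
        exact ⟨h2, h1⟩
      · rintro ⟨hzB, hzx⟩
        refine ⟨hBE' hzB, fun hc => ?_⟩
        rcases mem_insert_iff.mp hc with h | h
        · exact hzx h
        · exact h.2 hzB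
    have hdep : M'✶.Dep (insert x (M'.E \ B)) := by
      refine ⟨fun hc => hsp ?_, by rwa [dual_ground]⟩
      have := (coindep_iff_compl_spanning hins).mp hc
      rwa [hcompl] at this
    have hclx : x ∈ M'✶.closure (M'.E \ B) := ((hco.insert_dep_iff).mp hdep).1
    obtain ⟨D, hD, hDs, hxD⟩ := exists_circ_of_mem_closure hco hclx (fun h => h.2 hx)
    have hmin : ¬ IsMinOf x D := fun h => hxInt ⟨hx, D, hD, hDs, h⟩
    have hy : ∃ y ∈ D, y < x := by
      by_contra hc
      push_neg at hc
      exact hmin ⟨hxD, fun z hz => le_of_not_gt (fun hlt => absurd hlt (not_lt_of_ge (hc z hz)))⟩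
    obtain ⟨y, hyD, hyx⟩ := hy
    have hyB : y ∉ B := by
      rcases hDs hyD with h | h
      · exact absurd h (ne_of_lt hyx)
      · exact h.2
    have hyE' : y ∈ M'.E := by
      rcases hDs hyD with h | h
      · exact absurd h (ne_of_lt hyx)
      · exact h.1
    refine ⟨insert y (B \ {x}), ?_, ?_, ?_, Or.inr ⟨y, hyx, hyB, rfl⟩⟩
    · -- M-independence via the perspective and orthogonality with D
      by_contra hc
      have hBx : M.Indep (B \ {x}) := hBi.subset diff_subset
      have hyBx : y ∉ B \ {x} := fun h => hyB h.1
      have hycl : y ∈ M.closure (B \ {x}) := by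
        by_contra hycl
        exact hc ((hBx.insert_indep_iff_of_notMem hyBx).mpr
          ⟨hP.ground_eq.symm ▸ hyE', hycl⟩)
      have hycl' : y ∈ M'.closure (B \ {x}) :=
        hP.closure_subset_closure (diff_subset.trans hBi.subset_ground) hycl
      have hsub : B \ {x} ⊆ M'.E \ D := by
        intro z hz
        refine ⟨hBE' hz.1, fun hzD => ?_⟩
        rcases hDs hzD with h | h
        · exact hz.2 h
        · exact h.2 hz.1
      exact hD.not_mem_closure_compl hyD
        (mem_of_mem_of_subset hycl' (M'.closure_subset_closure hsub))
    · -- M'-spanning via uniqueness of the fundamental cocircuit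
      have hB'E : insert y (B \ {x}) ⊆ M'.E := insert_subset hyE' (diff_subset.trans hBE')
      rw [spanning_iff_compl_coindep hB'E]
      have hcompl2 : M'.E \ insert y (B \ {x}) = (insert x (M'.E \ B)) \ {y} := by
        ext z
        constructor
        · rintro ⟨hz, hzn⟩
          have h1 : z ≠ y := fun h => hzn (by rw [h]; exact mem_insert y _)
          refine ⟨?_, h1⟩
          by_cases hzB : z ∈ B
          · have hzx : z = x := by
              by_contra hc
              exact hzn (mem_insert_of_mem y ⟨hzB, hc⟩)
            exact Or.inl hzx
          · exact Or.inr ⟨hz, hzB⟩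
        · rintro ⟨hz, hzy⟩
          rcases hz with rfl | hz
          · refine ⟨hxE', fun hc => ?_⟩
            rcases mem_insert_iff.mp hc with h | h
            · exact hzy h
            · exact h.2 rfl
          · refine ⟨hz.1, fun hc => ?_⟩
            rcases mem_insert_iff.mp hc with h | h
            · exact hzy h
            · exact hz.2 h.1
      rw [Coindep, hcompl2]
      rw [indep_iff_no_circ (diff_subset.trans (by rwa [dual_ground]))]
      rintro ⟨C₂, hC₂s, hC₂⟩
      have : C₂ = D := circ_subset_insert_unique hco hC₂ hD
        (hC₂s.trans diff_subset) hDs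
      exact ((this ▸ hC₂s) hyD).2 rfl
    · rintro (h | h)
      · exact (ne_of_lt hyx) h.symm
      · exact h.2 rfl

lemma move_add (hP : Perspective M M') (hBi : M.Indep B) (hBs : M'.Spanning B)
    (hxE : x ∈ M.E) (hxB : x ∉ B) (hxExt : x ∉ ExtSet M B) :
    ∃ B', M.Indep B' ∧ M'.Spanning B' ∧ x ∈ B' ∧
      (B' = insert x B ∨ ∃ y, y < x ∧ y ∈ B ∧ B' = (insert x B) \ {y}) := by
  have hBE' : B ⊆ M'.E := hP.ground_eq ▸ hBi.subset_ground
  by_cases hind : M.Indep (insert x B)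
  · exact ⟨insert x B, hind, hBs.superset (subset_insert x B)
      (insert_subset (hP.ground_eq ▸ hxE) hBE'), mem_insert x B, Or.inl rfl⟩
  · have hdep : M.Dep (insert x B) := ⟨hind, insert_subset hxE hBi.subset_ground⟩
    have hclx : x ∈ M.closure B := ((hBi.insert_dep_iff).mp hdep).1
    obtain ⟨C, hC, hCs, hxC⟩ := exists_circ_of_mem_closure hBi hclx hxB
    have hmin : ¬ IsMinOf x C := fun h => hxExt ⟨⟨hxE, hxB⟩, C, hC, hCs, h⟩
    have hy : ∃ y ∈ C, y < x := by
      by_contra hc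
      push_neg at hc
      exact hmin ⟨hxC, fun z hz => le_of_not_gt (fun hlt => absurd hlt (not_lt_of_ge (hc z hz)))⟩
    obtain ⟨y, hyC, hyx⟩ := hy
    have hyB : y ∈ B := by
      rcases hCs hyC with h | h
      · exact absurd h (ne_of_lt hyx)
      · exact h
    refine ⟨(insert x B) \ {y}, ?_, ?_, ⟨mem_insert x B, ne_of_gt hyx⟩,
      Or.inr ⟨y, hyx, hyB, rfl⟩⟩
    · -- M-independence: the unique circuit in `insert x B` contains `y`
      rw [indep_iff_no_circ (diff_subset.trans (insert_subset hxE hBi.subset_ground))]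
      rintro ⟨C₂, hC₂s, hC₂⟩
      have : C₂ = C := circ_subset_insert_unique hBi hC₂ hC (hC₂s.trans diff_subset) hCs
      exact ((this ▸ hC₂s) hyC).2 rfl
    · -- M'-spanning
      obtain ⟨C', hC', hC'C, hyC'⟩ := hP.2 C hC y hyC
      have hycl : y ∈ M'.closure ((insert x B) \ {y}) := by
        refine mem_of_mem_of_subset (hC'.mem_closure_diff_singleton hyC')
          (M'.closure_subset_closure ?_)
        exact diff_subset_diff_left (hC'C.trans hCs)
      have hsub : insert x B ⊆ M'.E := insert_subset (hP.ground_eq ▸ hxE) hBE'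
      have h5 : insert y ((insert x B) \ {y}) = insert x B := by
        rw [insert_diff_singleton, insert_eq_of_mem (mem_insert_of_mem x hyB)]
      have hcl2' := closure_insert_eq_of_mem_closure hycl
      rw [h5] at hcl2'
      have hcl2 : M'.closure ((insert x B) \ {y}) = M'.closure (insert x B) := hcl2'.symm
      rw [spanning_iff_closure_eq (diff_subset.trans hsub), hcl2]
      exact hBs.closure_eq_of_superset (subset_insert x B)
end Moves


section Mu
variable [Fintype α] [LinearOrder α] {M M' : Matroid α} {B B' C D S T X Y I : Set α}
  {a e f g x y : α}

/-- weight of an element -/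
noncomputable def wt (b : α) : ℕ := (Set.Iio b).ncard + 1

lemma wt_lt_wt (h : y < x) : wt y < wt x := by
  have hss : Set.Iio y ⊂ Set.Iio x :=
    ⟨Iio_subset_Iio h.le, fun hc => absurd (hc (mem_Iio.mpr h)) (lt_irrefl y)⟩
  have := Set.ncard_lt_ncard hss (Set.toFinite _)
  simp only [wt]
  omega

/-- weighted sum over a set -/
noncomputable def wsum (A : Set α) : ℕ := ∑ b ∈ Finset.univ, A.indicator wt b

lemma indicator_single_sum (x : α) : ∑ b ∈ Finset.univ, ({x} : Set α).indicator wt b = wt x := by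
  have h : ∀ b, ({x} : Set α).indicator wt b = if b = x then wt b else 0 := by
    intro b
    by_cases hb : b = x
    · subst hb
      rw [Set.indicator_of_mem (mem_singleton b) wt, if_pos rfl]
    · rw [Set.indicator_of_notMem (fun h => hb (mem_singleton_iff.mp h)) wt, if_neg hb]
  rw [Finset.sum_congr rfl (fun b _ => h b), Finset.sum_ite_eq' Finset.univ x wt]
  simp

/-- measure: weighted symmetric difference with `S` -/
noncomputable def muD (S T : Set α) : ℕ := wsum ((T \ S) ∪ (S \ T))

lemma mu_le_of_subset {A A' : Set α} (h : A ⊆ A') : wsum A ≤ wsum A' := by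
  refine Finset.sum_le_sum fun i _ => ?_
  by_cases hi : i ∈ A
  · rw [Set.indicator_of_mem hi, Set.indicator_of_mem (h hi)]
  · rw [Set.indicator_of_notMem hi]
    exact Nat.zero_le _

lemma mu_remove {A : Set α} (hx : x ∈ A) : wsum (A \ {x}) + wt x = wsum A := by
  have h : ∀ b, A.indicator wt b = (A \ {x}).indicator wt b + ({x} : Set α).indicator wt b := by
    intro b
    by_cases hbx : b = x
    · subst hbx
      rw [Set.indicator_of_mem hx wt, Set.indicator_of_notMem (fun h => h.2 rfl) wt,
        Set.indicator_of_mem (mem_singleton b) wt, zero_add]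
    · rw [Set.indicator_of_notMem (fun h => hbx (mem_singleton_iff.mp h)) wt, add_zero]
      by_cases hbA : b ∈ A
      · rw [Set.indicator_of_mem hbA wt, Set.indicator_of_mem (mem_diff_singleton.mpr ⟨hbA, hbx⟩) wt]
      · rw [Set.indicator_of_notMem hbA wt, Set.indicator_of_notMem (fun h => hbA h.1) wt]
  rw [wsum, wsum, Finset.sum_congr rfl (fun b _ => h b), Finset.sum_add_distrib,
    indicator_single_sum]

lemma mu_insert_le {A : Set α} (y : α) : wsum (A ∪ {y}) ≤ wsum A + wt y := by
  have h : ∀ b, (A ∪ {y}).indicator wt b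
      ≤ A.indicator wt b + ({y} : Set α).indicator wt b := by
    intro b
    by_cases hbA : b ∈ A
    · rw [Set.indicator_of_mem (mem_union_left {y} hbA) wt, Set.indicator_of_mem hbA wt]
      exact Nat.le_add_right _ _
    · by_cases hby : b = y
      · subst hby
        rw [Set.indicator_of_mem (mem_union_right A (mem_singleton b)) wt,
          Set.indicator_of_notMem hbA wt, Set.indicator_of_mem (mem_singleton b) wt]
        omega
      · rw [Set.indicator_of_notMem
            (fun h => (mem_union _ _ _).mp h |>.elim hbA (fun hh => hby (mem_singleton_iff.mp hh))) wt,
          Set.indicator_of_notMem hbA wt,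
          Set.indicator_of_notMem (fun h => hby (mem_singleton_iff.mp h)) wt]
        omega
  calc wsum (A ∪ {y}) ≤ ∑ b ∈ Finset.univ,
        (A.indicator wt b + ({y} : Set α).indicator wt b) :=
          Finset.sum_le_sum (fun b _ => h b)
    _ = wsum A + wt y := by
        rw [Finset.sum_add_distrib, indicator_single_sum]
        rfl

lemma muD_lt_of_subset_remove (hsub : (B' \ S) ∪ (S \ B') ⊆ ((B \ S) ∪ (S \ B)) \ {x})
    (hx : x ∈ (B \ S) ∪ (S \ B)) : muD S B' < muD S B := by
  have h1 := mu_le_of_subset hsub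
  have h2 := mu_remove (A := (B \ S) ∪ (S \ B)) hx
  have h3 : 0 < wt x := by simp [wt]
  unfold muD
  omega

lemma muD_lt_of_subset_swap (hsub : (B' \ S) ∪ (S \ B') ⊆ (((B \ S) ∪ (S \ B)) \ {x}) ∪ {y})
    (hyx : y < x) (hx : x ∈ (B \ S) ∪ (S \ B)) : muD S B' < muD S B := by
  have h1 := mu_le_of_subset hsub
  have h2 := mu_remove (A := (B \ S) ∪ (S \ B)) hx
  have h4 := mu_insert_le (A := ((B \ S) ∪ (S \ B)) \ {x}) y
  have h5 := wt_lt_wt hyx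
  unfold muD
  omega

lemma exists_good_basis (hP : Perspective M M') (hS : S ⊆ M.E) :
    ∀ B, M.Indep B → M'.Spanning B →
      ∃ B', M.Indep B' ∧ M'.Spanning B' ∧ B' \ IntSet M' B' ⊆ S ∧ S ⊆ B' ∪ ExtSet M B' := by
  intro B hBi hBs
  by_cases h1 : ∃ x, x ∈ B ∧ x ∉ S ∧ x ∉ IntSet M' B
  · obtain ⟨x, hxB, hxS, hxI⟩ := h1
    obtain ⟨B'', hi, hs, hxn, hcase⟩ := move_remove hP hBi hBs hxB hxI
    have hxd : x ∈ (B \ S) ∪ (S \ B) := Or.inl ⟨hxB, hxS⟩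
    have hlt : muD S B'' < muD S B := by
      rcases hcase with rfl | ⟨y, hyx, hyB, rfl⟩
      · refine muD_lt_of_subset_remove ?_ hxd
        rintro z (hz | hz)
        · exact ⟨Or.inl ⟨hz.1.1, hz.2⟩, hz.1.2⟩
        · refine ⟨Or.inr ⟨hz.1, fun hc => hz.2 ⟨hc, fun he => hxS ((he : z = x) ▸ hz.1)⟩⟩,
            fun he => hxS ((he : z = x) ▸ hz.1)⟩
      · refine muD_lt_of_subset_swap ?_ hyx hxd
        rintro z (hz | hz)
        · rcases mem_insert_iff.mp hz.1 with rfl | hzB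
          · exact Or.inr rfl
          · exact Or.inl ⟨Or.inl ⟨hzB.1, hz.2⟩, hzB.2⟩
        · have hzB : z ∉ B \ {x} := fun hc => hz.2 (mem_insert_of_mem y hc)
          have hzx : z ≠ x := fun he => hxS (he ▸ hz.1)
          have hzBB : z ∉ B := fun hc => hzB ⟨hc, hzx⟩
          exact Or.inl ⟨Or.inr ⟨hz.1, hzBB⟩, hzx⟩
    exact exists_good_basis hP hS B'' hi hs
  by_cases h2 : ∃ x, x ∈ S ∧ x ∉ B ∧ x ∉ ExtSet M B
  · obtain ⟨x, hxS, hxB, hxE⟩ := h2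
    obtain ⟨B'', hi, hs, hxn, hcase⟩ := move_add hP hBi hBs (hS hxS) hxB hxE
    have hxd : x ∈ (B \ S) ∪ (S \ B) := Or.inr ⟨hxS, hxB⟩
    have hlt : muD S B'' < muD S B := by
      rcases hcase with rfl | ⟨y, hyx, hyB, rfl⟩
      · refine muD_lt_of_subset_remove ?_ hxd
        rintro z (hz | hz)
        · rcases mem_insert_iff.mp hz.1 with rfl | hzB
          · exact absurd hxS hz.2
          · exact ⟨Or.inl ⟨hzB, hz.2⟩, fun he => hxB ((he : z = x) ▸ hzB)⟩
        · exact ⟨Or.inr ⟨hz.1, fun hc => hz.2 (mem_insert_of_mem x hc)⟩,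
            fun he => hz.2 ((he : z = x) ▸ mem_insert x B)⟩
      · refine muD_lt_of_subset_swap ?_ hyx hxd
        rintro z (hz | hz)
        · rcases mem_insert_iff.mp hz.1.1 with rfl | hzB
          · exact absurd hxS hz.2
          · exact Or.inl ⟨Or.inl ⟨hzB, hz.2⟩, fun he => hxB ((he : z = x) ▸ hzB)⟩
        · by_cases hzy : z = y
          · exact Or.inr hzy
          · have hzB : z ∉ insert x B := fun hc => hz.2 ⟨hc, hzy⟩
            have hzBB : z ∉ B := fun hc => hzB (mem_insert_of_mem x hc)
            exact Or.inl ⟨Or.inr ⟨hz.1, hzBB⟩,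
              fun he => hzB ((he : z = x) ▸ mem_insert x B)⟩
    exact exists_good_basis hP hS B'' hi hs
  · push_neg at h1 h2
    refine ⟨B, hBi, hBs, ?_, ?_⟩
    · intro z hz
      by_contra hzS
      exact hz.2 (h1 z hz.1 hzS)
    · intro z hzS
      by_contra hzB
      rw [mem_union] at hzB
      push_neg at hzB
      exact hzB.2 (h2 z hzS hzB.1)
termination_by B => muD S B
decreasing_by exacts [hlt, hlt]
end Mu


section Assemble
variable [Fintype α] [LinearOrder α] {M M' : Matroid α} {B C D S T X Y I : Set α}
  {a e f g x y : α}

lemma rset_def (M : Matroid α) (X : Set α) : rset M X = rkN (M ↾ X) := rfl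

lemma mcon_def (M : Matroid α) (X : Set α) : mcon M X = (M✶ ↾ (M✶.E \ X))✶ := rfl

/-- The external-activity set, determined by the image set alone. -/
def extX (M : Matroid α) (X : Set α) : Set α :=
  {e | e ∈ X ∧ e ∈ M.closure {f | f ∈ X ∧ e < f}}

/-- The inverse of the activity bijection. -/
def psiMap (M M' : Matroid α) (X : Set α) : Set α :=
  (X \ extX M X) ∪ extX (M'✶) (M.E \ X)

lemma extSet_eq_extX (hP : Perspective M M') (hBi : M.Indep B) :
    ExtSet M B = extX M ((B \ IntSet M' B) ∪ ExtSet M B) :=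
  extSet_eq_phi_char hP hBi

/-- Master lemma: all the properties of the forward map. -/
lemma master (hP : Perspective M M') (hBi : M.Indep B) (hBs : M'.Spanning B) :
    ((B \ IntSet M' B) ∪ ExtSet M B) ∈ DSet M M' ∧
    psiMap M M' ((B \ IntSet M' B) ∪ ExtSet M B) = B ∧
    rkN (mcon M' ((B \ IntSet M' B) ∪ ExtSet M B)) = (IntSet M' B).ncard ∧
    rkN ((M ↾ ((B \ IntSet M' B) ∪ ExtSet M B))✶) = (ExtSet M B).ncard ∧
    rset M ((B \ IntSet M' B) ∪ ExtSet M B) - rset M' ((B \ IntSet M' B) ∪ ExtSet M B)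
      = rset M B - rset M' B := by
  have hE : M.E = M'.E := hP.ground_eq
  have hIntB : IntSet M' B ⊆ B := IntSet_subset M' B
  have hExtEB : ExtSet M B ⊆ M.E \ B := ExtSet_subset M B
  have hBE : B ⊆ M.E := hBi.subset_ground
  set Int := IntSet M' B
  set Ext := ExtSet M B
  set X := (B \ Int) ∪ Ext with hXdef
  have hXE : X ⊆ M.E := phi_subset_ground hBi hP
  have hPd : Perspective (M'✶) (M✶) := hP.dual
  have hEB' : M'.E \ B = M.E \ B := by rw [hE]
  have hBid : M'✶.Indep (M.E \ B) := by
    rw [← hEB']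
    exact (spanning_iff_compl_coindep (hE ▸ hBE)).mp hBs
  have hBsd : M✶.Spanning (M✶.E \ B) := hBi.coindep.compl_spanning
  have hBsd' : M✶.Spanning (M.E \ B) := by rwa [dual_ground] at hBsd
  have hIdual : IntSet (M✶) (M.E \ B) = Ext := (extSet_eq_intSet_dual hBE).symm
  have hEdual : ExtSet (M'✶) (M.E \ B) = Int := by
    rw [← hEB']
    exact (intSet_eq_extSet_dual (hE ▸ hBE)).symm
  have hset : ((M.E \ B) \ Ext) ∪ Int = M.E \ X := by
    ext z
    constructor
    · rintro (⟨⟨hz1, hz2⟩, hz3⟩ | hz)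
      · exact ⟨hz1, fun hc => hc.elim (fun h => hz2 h.1) hz3⟩
      · refine ⟨hBE (hIntB hz), fun hc => ?_⟩
        rcases hc with h | h
        · exact h.2 hz
        · exact (hExtEB h).2 (hIntB hz)
    · rintro ⟨hzE, hzX⟩
      by_cases hzB : z ∈ B
      · right
        by_contra h
        exact hzX (Or.inl ⟨hzB, h⟩)
      · left
        exact ⟨⟨hzE, hzB⟩, fun h => hzX (Or.inr h)⟩
  have hbasis : M.IsBasis (B \ Int) X := basis_phi hP hBi
  have hbasisd : M'✶.IsBasis ((M.E \ B) \ Ext) (M.E \ X) := by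
    have h := basis_phi hPd hBid
    rwa [hIdual, hEdual, hset] at h
  -- DSet membership
  have hc1 : Compat M (M.E \ X) := compat_compl_phi hP hBi hBs
  have hc2 : Compat (M'✶) X := by
    have h := compat_compl_phi hPd hBid hBsd'
    rw [hIdual, hEdual, hset] at h
    have h2 : M'✶.E \ (M.E \ X) = X := by
      rw [dual_ground, ← hE]
      exact diff_diff_cancel_left hXE
    rwa [h2] at h
  have hDmem : X ∈ DSet M M' := ⟨hXE, hc2, hc1⟩
  -- inverse map
  have hExtChar : Ext = extX M X := extSet_eq_extX hP hBi
  have hIntChar : Int = extX (M'✶) (M.E \ X) := by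
    have h := extSet_eq_extX hPd hBid
    rw [hIdual, hEdual, hset] at h
    exact h
  have hpsi : psiMap M M' X = B := by
    rw [psiMap, ← hExtChar, ← hIntChar]
    ext z
    constructor
    · rintro (⟨hz1, hz2⟩ | hz)
      · rcases hz1 with h | h
        · exact h.1
        · exact absurd h hz2
      · exact hIntB hz
    · intro hzB
      by_cases hzI : z ∈ Int
      · exact Or.inr hzI
      · exact Or.inl ⟨Or.inl ⟨hzB, hzI⟩, fun hc => (hExtEB hc).2 hzB⟩
  -- rank computations
  have v1 : rset M X = (B \ Int).ncard := rset_eq_ncard_of_basis hbasis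
  have v2 : rset (M'✶) (M.E \ X) = ((M.E \ B) \ Ext).ncard := rset_eq_ncard_of_basis hbasisd
  have c_y : rkN ((M ↾ X)✶) + rset M X = X.ncard := by
    have h := rkN_dual_add (M ↾ X)
    rwa [restrict_ground_eq, ← rset_def] at h
  have hg : M'✶.E = M.E := by rw [dual_ground, ← hE]
  have c_x : rkN (mcon M' X) + rset (M'✶) (M.E \ X) = (M.E \ X).ncard := by
    rw [mcon_def, ← hg]
    have h := rkN_dual_add (M'✶ ↾ (M'✶.E \ X))
    rwa [restrict_ground_eq, ← rset_def] at h
  have e1 := rformula M' (show M'.E \ X ⊆ M'.E from diff_subset)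
  rw [diff_diff_cancel_left (hE ▸ hXE), ← hE] at e1
  -- e1 : rset M'✶ (M.E \ X) + rkN M' = (M.E \ X).ncard + rset M' X
  have k1 : (B \ Int).ncard + Int.ncard = B.ncard := ncard_diff_add_ncard_of_subset hIntB
  have k2 : X.ncard = (B \ Int).ncard + Ext.ncard := by
    rw [hXdef]
    exact ncard_union_eq (disjoint_left.mpr (fun a ha hc => (hExtEB hc).2 ha.1))
  have k3 : ((M.E \ B) \ Ext).ncard + Ext.ncard = (M.E \ B).ncard :=
    ncard_diff_add_ncard_of_subset hExtEB
  have k4 : (M.E \ X).ncard + X.ncard = (M.E).ncard := ncard_diff_add_ncard_of_subset hXE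
  have k5 : (M.E \ B).ncard + B.ncard = (M.E).ncard := ncard_diff_add_ncard_of_subset hBE
  have f1 : rset M B = B.ncard := rset_indep hBi
  have f2 : rset M' B = rkN M' := rset_spanning hBs
  have f3 : rkN M' ≤ B.ncard := by
    obtain ⟨B₀, hB₀, hB₀B⟩ := hBs.exists_isBase_subset
    rw [rkN_eq_ncard_of_base hB₀]
    exact ncard_le_ncard hB₀B (toFinite B)
  refine ⟨hDmem, hpsi, by omega, by omega, by omega⟩

/-- Surjectivity: every member of `DSet` is the image of a basis of the perspective. -/
lemma dset_surj (hP : Perspective M M') (hX : X ∈ DSet M M') :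
    ∃ B, M.Indep B ∧ M'.Spanning B ∧ (B \ IntSet M' B) ∪ ExtSet M B = X := by
  obtain ⟨B₀, hB₀⟩ := M'.exists_isBase
  obtain ⟨B, hBi, hBs, h1, h2⟩ :=
    exists_good_basis hP hX.1 B₀ (hP.indep_of_indep hB₀.indep) hB₀.spanning
  refine ⟨B, hBi, hBs, ?_⟩
  obtain ⟨hXE, hcX, hcE⟩ := hX
  have hExtX : ExtSet M B ⊆ X := by
    intro e he
    by_contra heX
    obtain ⟨⟨heE, heB⟩, C, hC, hCs, hmin⟩ := he
    refine hcE ⟨C, e, hC, hmin, ?_⟩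
    ext z
    constructor
    · rintro ⟨⟨hzE, hzX⟩, hzC⟩
      by_contra hze
      have hzB : z ∈ B := by
        rcases hCs hzC with h | h
        · exact absurd h hze
        · exact h
      have hzInt : z ∈ IntSet M' B := by
        by_contra hzI
        exact hzX (h1 ⟨hzB, hzI⟩)
      have hemp := circ_inter_intSet_empty hP hC hCs hmin heB
      rw [eq_empty_iff_forall_notMem] at hemp
      exact hemp z ⟨hzC, hzInt⟩
    · intro hz
      rw [mem_singleton_iff] at hz
      subst hz
      exact ⟨⟨heE, heX⟩, hmin.1⟩
  have hIntX : ∀ e, e ∈ X → e ∉ IntSet M' B := by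
    intro e heX heI
    obtain ⟨heB, D, hD, hDs, hminD⟩ := heI
    refine hcX ⟨D, e, hD, hminD, ?_⟩
    ext z
    constructor
    · rintro ⟨hzX, hzD⟩
      by_contra hze
      have hzB : z ∉ B := by
        rcases hDs hzD with h | h
        · exact absurd h hze
        · exact h.2
      have hzExt : z ∈ ExtSet M B := by
        rcases h2 hzX with h | h
        · exact absurd h hzB
        · exact h
      obtain ⟨-, Cz, hCz, hCzs, hminz⟩ := hzExt
      obtain ⟨w, hw, hwz⟩ := hP.exists_ne_of_mem_inter hCz hD ⟨hminz.1, hzD⟩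
      have hwe : w = e := by
        rcases hCzs hw.1 with h | h
        · exact absurd h hwz
        · rcases hDs hw.2 with h' | h'
          · exact h'
          · exact absurd h h'.2
      have l1 : z ≤ e := hminz.2 e (hwe ▸ hw.1)
      have l2 : e ≤ z := hminD.2 z hzD
      exact hze (le_antisymm l1 l2)
    · intro hz
      rw [mem_singleton_iff] at hz
      subst hz
      exact ⟨heX, hminD.1⟩
  apply Subset.antisymm
  · rintro z (hz | hz)
    · exact h1 hz
    · exact hExtX hz
  · intro z hzX
    rcases h2 hzX with hzB | hzE
    · exact Or.inl ⟨hzB, hIntX z hzX⟩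
    · exact Or.inr hzE

end Assemble


/-- The compatible-sets expansion of the Las Vergnas trivariate Tutte polynomial of a
matroid perspective equals the internal-external activities expansion. -/
theorem trivariate_tutte_expansion [Fintype α] [LinearOrder α] (M M' : Matroid α)
    (hP : Perspective M M') {R : Type*} [CommRing R] (x y z : R) :
    ∑ B : Set α, (if M.Indep B ∧ M'.Spanning B then
        x ^ (IntSet M' B).ncard * y ^ (ExtSet M B).ncard *
          z ^ (rkN M - rkN M' - (rset M B - rset M' B)) else 0) =
    ∑ X : Set α, (if X ∈ DSet M M' then
        x ^ rkN (mcon M' X) * y ^ rkN ((M ↾ X)✶) *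
          z ^ (rkN M - rkN M' - (rset M X - rset M' X)) else 0) := by
  classical
  rw [← Finset.sum_filter, ← Finset.sum_filter]
  refine Finset.sum_bij' (i := fun B _ => (B \ IntSet M' B) ∪ ExtSet M B)
    (j := fun X _ => psiMap M M' X) ?_ ?_ ?_ ?_ ?_
  · intro B hB
    rw [Finset.mem_filter] at hB ⊢
    exact ⟨Finset.mem_univ _, (master hP hB.2.1 hB.2.2).1⟩
  · intro X hX
    beta_reduce
    rw [Finset.mem_filter] at hX ⊢
    obtain ⟨B, hBi, hBs, hBX⟩ := dset_surj hP hX.2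
    have hpsi := (master hP hBi hBs).2.1
    rw [hBX] at hpsi
    rw [hpsi]
    exact ⟨Finset.mem_univ _, hBi, hBs⟩
  · intro B hB
    beta_reduce
    rw [Finset.mem_filter] at hB
    exact (master hP hB.2.1 hB.2.2).2.1
  · intro X hX
    beta_reduce
    rw [Finset.mem_filter] at hX
    obtain ⟨B, hBi, hBs, hBX⟩ := dset_surj hP hX.2
    have hpsi := (master hP hBi hBs).2.1
    rw [hBX] at hpsi
    rw [hpsi]
    exact hBX
  · intro B hB
    beta_reduce
    rw [Finset.mem_filter] at hB
    obtain ⟨-, h2, h3, h4, h5⟩ := master hP hB.2.1 hB.2.2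
    rw [h3, h4, h5]
end

section
/- Let M be a matroid on a finite totally ordered ground set E, let X ⊆ E with E\X (M,<)-compatible, and let B' = B_min((M|X)*) be the lexicographically minimal basis of (M|X)*. If B ⊆ E contains X\B' and B ∩ X = X\B', and e = min(B' \ Ext_M(B)) exists, then a contradiction arises; consequently B' ⊆ Ext_M(B) whenever B is independent in M with B ∩ X = X\B' and no circuit of M meets E\X only in its minimum. -/
open Matroid Set
open scoped Classical

variable {α : Type*}

lemma exists_circ_subset [Fintype α] {M : Matroid α} {S : Set α} (hS : M.Dep S) :
    ∃ C, C ⊆ S ∧ Minimal M.Dep C := by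
  exact exists_minimal_le_of_wellFoundedLT M.Dep S hS

/-- If `E \ X` is `(M,<)`-compatible, `B'` is the lexicographically minimal basis of
`(M|X)✶`, and `B` is independent in `M` with `B ∩ X = X \ B'`, then `B' ⊆ Ext_M(B)`. -/
theorem minBasis_subset_extActive [Fintype α] [LinearOrder α] (M : Matroid α)
    (X B' B : Set α) (hX : X ⊆ M.E) (hcomp : Compat M (M.E \ X))
    (hB' : MinBasis ((M ↾ X)✶) B') (hB : M.Indep B) (hBX : B ∩ X = X \ B') :
    B' ⊆ ExtSet M B := by
  intro e heB'
  set N := M ↾ X with hN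
  have hNB' : N✶.IsBase B' := hB'.1
  have hB'X : B' ⊆ X := hNB'.subset_ground
  have heX : e ∈ X := hB'X heB'
  have hBse : N.IsBase (X \ B') := by
    have h := hNB'.compl_isBase_of_dual
    rwa [restrict_ground_eq] at h
  have heBse : e ∉ X \ B' := fun h => h.2 heB'
  have heB : e ∉ B := fun h => heBse (hBX ▸ ⟨h, heX⟩)
  have hdep : N.Dep (insert e (X \ B')) := hBse.insert_dep ⟨heX, heBse⟩
  obtain ⟨C, hCsub, hC⟩ := exists_circ_subset hdep
  have hCX : C ⊆ X := hCsub.trans (insert_subset heX diff_subset)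
  have heC : e ∈ C := by
    by_contra h
    have hsub : C ⊆ X \ B' := fun x hx =>
      ((hCsub hx).resolve_left (fun hx' => h (hx' ▸ hx)))
    exact hC.1.1 (restrict_indep_iff.2
      ⟨(hBse.indep.subset hsub).of_restrict, hsub.trans diff_subset⟩)
  have hCM : Circ M C := by
    have h1 := restrict_dep_iff.1 hC.1
    exact ⟨⟨h1.1, hCX.trans hX⟩, fun D hD hDC =>
      hC.2 (restrict_dep_iff.2 ⟨hD.1, hDC.trans hCX⟩) hDC⟩
  refine ⟨⟨hX heX, heB⟩, C, hCM, ?_, heC, ?_⟩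
  · refine hCsub.trans (insert_subset_insert ?_)
    rw [← hBX]; exact inter_subset_left
  intro f hf
  by_contra hle
  have hlt : f < e := lt_of_not_ge hle
  have hfe : f ≠ e := ne_of_lt hlt
  have hfC : f ∈ X \ B' := (hCsub hf).resolve_left hfe
  have hIdf : N.Indep ((X \ B') \ {f}) := hBse.indep.subset diff_subset
  have hecl : e ∉ N.closure ((X \ B') \ {f}) := by
    intro hecl
    have hCf_ind : N.Indep (C \ {f}) := by
      rw [← not_dep_iff (show C \ {f} ⊆ N.E from diff_subset.trans hCX)]
      intro hdep'
      exact (hC.2 hdep' diff_subset hf).2 rfl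
    have hfcl : f ∈ N.closure (C \ {f}) := by
      have hd : N.Dep (insert f (C \ {f})) := by
        rw [insert_diff_singleton, insert_eq_of_mem hf]; exact hC.1
      exact ((hCf_ind.insert_dep_iff).1 hd).1
    have hsub : C \ {f} ⊆ insert e ((X \ B') \ {f}) := by
      intro x hx
      rcases hCsub hx.1 with h | h
      · exact h ▸ mem_insert _ _
      · exact mem_insert_of_mem _ ⟨h, hx.2⟩
    have hfin : f ∈ N.closure ((X \ B') \ {f}) := by
      have h1 := N.closure_subset_closure hsub hfcl
      rwa [closure_insert_eq_of_mem_closure hecl] at h1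
    exact hBse.indep.notMem_closure_diff_of_mem hfC hfin
  have hB2i : N.Indep (insert e ((X \ B') \ {f})) :=
    ((hIdf.notMem_closure_iff (show e ∈ N.E from heX)).1 hecl).1
  have hB2 : N.IsBase (insert e (X \ B') \ {f}) := by
    refine hBse.exchange_isBase_of_indep' hfC heBse ?_
    rwa [← insert_diff_singleton_comm hfe.symm]
  have hdual : N✶.IsBase (X \ (insert e (X \ B') \ {f})) := by
    have h := hB2.compl_isBase_dual
    rwa [restrict_ground_eq] at h
  refine hB'.2 _ hdual ⟨f, ⟨hfC.1, fun h => h.2 rfl⟩, hfC.2, ?_⟩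
  intro g hg
  have hge : g ≠ e := ne_of_lt (hg.trans hlt)
  have hgf : g ≠ f := ne_of_lt hg
  constructor
  · rintro ⟨hgX, h⟩
    by_contra hgB'
    exact h ⟨mem_insert_iff.2 (Or.inr ⟨hgX, hgB'⟩), hgf⟩
  · intro hgB'
    refine ⟨hB'X hgB', fun h => ?_⟩
    rcases mem_insert_iff.1 h.1 with h1 | h1
    · exact hge h1
    · exact h1.2 hgB'
end
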